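/- arXiv:1409.2299 — 3 statements merged into one kernel-verified Lean document; each statement's English description precedes it below -/
import Mathlib

section
/- The modified Gegenbauer polynomials U_i satisfy the second-order differential equation d²/dx²[x(1-x)U_i(x)] = -i(i-1)·U_i(x) on (0,1), for each i ≥ 2; in particular the eigenvalue is λ_i = i(i-1). -/
/-- The modified Gegenbauer polynomial `U_n`, for `n ≥ 2`, given by the explicit
formula `U_{i+2}(x) = Σ_{m=0}^{i} (-1)^{i-m+1}·(i+1)!²/(m!(i-m+1)!(m+1)!(i-m)!)·x^m(1-x)^{i-m}`
with `n = i + 2`. -/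
noncomputable def modGegenbauer (n : ℕ) (x : ℝ) : ℝ :=
  ∑ m ∈ Finset.range (n - 1),
    (-1 : ℝ) ^ (n - 2 - m + 1) *
      ((Nat.factorial (n - 1) : ℝ) * Nat.factorial (n - 1)) /
      ((Nat.factorial m : ℝ) * Nat.factorial (n - 1 - m) *
        Nat.factorial (m + 1) * Nat.factorial (n - 2 - m)) *
      x ^ m * (1 - x) ^ (n - 2 - m)


section ModGegenbauerAux
open Polynomial Finset

noncomputable def mgCoeff (k m : ℕ) : ℝ :=
  (-1 : ℝ) ^ (k - m + 1) * ((Nat.factorial (k+1) : ℝ) * Nat.factorial (k+1)) /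
    ((Nat.factorial m : ℝ) * Nat.factorial (k + 1 - m) * Nat.factorial (m + 1) *
      Nat.factorial (k - m))

noncomputable def mgPoly (k : ℕ) : Polynomial ℝ :=
  ∑ m ∈ range (k+1), C (mgCoeff k m) * X ^ m * (1 - X) ^ (k - m)

lemma d2 (a b : ℕ) :
    derivative (derivative ((X : ℝ[X]) ^ (a+1) * ((1 : ℝ[X]) - X) ^ (b+1))) =
      C ((a * (a+1) : ℕ) : ℝ) * X ^ (a-1) * (1 - X) ^ b
      + C ((b * (b+1) : ℕ) : ℝ) * X ^ a * (1 - X) ^ (b-1)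
      - C (((a+b+1) * (a+b+2) : ℕ) : ℝ) * X ^ a * (1 - X) ^ b := by
  rcases a with _|a <;> rcases b with _|b <;>
    simp [derivative_mul, derivative_pow, map_ofNat] <;> push_cast <;> ring

lemma coeff_cancel (k m : ℕ) (h : m < k) :
    mgCoeff k (m+1) * (((m+1) * ((m+1)+1) : ℕ) : ℝ)
      + mgCoeff k m * (((k-m) * (k-m+1) : ℕ) : ℝ) = 0 := by
  obtain ⟨d, rfl⟩ : ∃ d, k = m + 1 + d := ⟨k - (m+1), by omega⟩
  have e1 : m + 1 + d - (m + 1) = d := by omega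
  have e2 : m + 1 + d - m = d + 1 := by omega
  have e3 : m + 1 + d + 1 - (m + 1) = d + 1 := by omega
  have e4 : m + 1 + d + 1 - m = d + 2 := by omega
  simp only [mgCoeff, e1, e2, e3, e4]
  have hm : (Nat.factorial m : ℝ) ≠ 0 := by positivity
  have hm1 : (Nat.factorial (m+1) : ℝ) ≠ 0 := by positivity
  have hm2 : (Nat.factorial (m+2) : ℝ) ≠ 0 := by positivity
  have hd : (Nat.factorial d : ℝ) ≠ 0 := by positivity
  have hd1 : (Nat.factorial (d+1) : ℝ) ≠ 0 := by positivity
  have hd2 : (Nat.factorial (d+2) : ℝ) ≠ 0 := by positivity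
  rw [show Nat.factorial (m+2) = (m+2) * Nat.factorial (m+1) from rfl,
      show Nat.factorial (m+1) = (m+1) * Nat.factorial m from rfl,
      show Nat.factorial (d+2) = (d+2) * Nat.factorial (d+1) from rfl,
      show Nat.factorial (d+1) = (d+1) * Nat.factorial d from rfl]
  field_simp
  push_cast
  ring

lemma mg_main (k : ℕ) :
    derivative (derivative ((X : ℝ[X]) * (1 - X) * mgPoly k)) =
      C (-(((k+1) * (k+2) : ℕ) : ℝ)) * mgPoly k := by
  have h1 : (X : ℝ[X]) * (1 - X) * mgPoly k
      = ∑ m ∈ range (k+1), C (mgCoeff k m) * (X ^ (m+1) * (1 - X) ^ ((k-m)+1)) := by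
    rw [mgPoly, Finset.mul_sum]
    exact Finset.sum_congr rfl fun m hm => by ring
  have h2 : derivative (derivative ((X : ℝ[X]) * (1 - X) * mgPoly k))
      = ∑ m ∈ range (k+1),
          (C (mgCoeff k m * ((m * (m+1) : ℕ) : ℝ)) * (X ^ (m-1) * (1 - X) ^ (k-m))
           + C (mgCoeff k m * (((k-m) * ((k-m)+1) : ℕ) : ℝ)) * (X ^ m * (1 - X) ^ ((k-m)-1))
           - C (mgCoeff k m * (((k+1) * (k+2) : ℕ) : ℝ)) * (X ^ m * (1 - X) ^ (k-m))) := by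
    rw [h1, derivative_sum, derivative_sum]
    refine sum_congr rfl fun m hm => ?_
    rw [derivative_C_mul, derivative_C_mul, d2,
        show m + (k-m) + 1 = k + 1 from by simp at hm; omega,
        show m + (k-m) + 2 = k + 2 from by simp at hm; omega]
    simp only [C_mul]
    ring
  have hz : (∑ m ∈ range (k+1),
        C (mgCoeff k m * ((m * (m+1) : ℕ) : ℝ)) * (X ^ (m-1) * (1 - X) ^ (k-m)))
      + (∑ m ∈ range (k+1),
        C (mgCoeff k m * (((k-m) * ((k-m)+1) : ℕ) : ℝ)) * (X ^ m * ((1:ℝ[X]) - X) ^ ((k-m)-1)))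
      = 0 := by
    rw [Finset.sum_range_succ', Finset.sum_range_succ]
    simp only [Nat.sub_self, Nat.zero_mul, Nat.cast_zero, mul_zero, map_zero, zero_mul,
      add_zero, Nat.add_sub_cancel]
    rw [← Finset.sum_add_distrib]
    refine Finset.sum_eq_zero fun m hm => ?_
    have hmk : m < k := mem_range.mp hm
    rw [show (k - m) - 1 = k - (m+1) from by omega, ← add_mul, ← C_add,
        show mgCoeff k (m+1) * (((m+1) * ((m+1)+1) : ℕ) : ℝ)
            + mgCoeff k m * (((k-m) * ((k-m)+1) : ℕ) : ℝ) = 0 from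
          coeff_cancel k m hmk,
        map_zero, zero_mul]
  rw [h2]
  rw [Finset.sum_sub_distrib, Finset.sum_add_distrib, hz, zero_sub]
  rw [mgPoly, Finset.mul_sum, ← Finset.sum_neg_distrib]
  refine sum_congr rfl fun m hm => ?_
  simp only [C_mul, map_neg]
  ring

lemma mg_eval (k : ℕ) (x : ℝ) : modGegenbauer (k+2) x = (mgPoly k).eval x := by
  rw [modGegenbauer, mgPoly, eval_finset_sum]
  simp only [eval_mul, eval_pow, eval_sub, eval_one, eval_X, eval_C, mgCoeff]
  rfl

/-- The modified Gegenbauer polynomials satisfy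
 on , with eigenvalue . -/
theorem modGegenbauer_eigen (i : ℕ) (hi : 2 ≤ i) :
    ∀ x ∈ Set.Ioo (0:ℝ) 1,
      deriv (deriv (fun y : ℝ => y * (1 - y) * modGegenbauer i y)) x =
        -((i : ℝ) * ((i : ℝ) - 1)) * modGegenbauer i x := by
  obtain ⟨k, rfl⟩ : ∃ k, i = k + 2 := ⟨i - 2, by omega⟩
  intro x hx
  have hf : (fun y : ℝ => y * (1 - y) * modGegenbauer (k+2) y)
      = fun y : ℝ => (((X : ℝ[X]) * (1 - X) * mgPoly k)).eval y := by
    funext y; simp [mg_eval]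
  have hd1 : deriv (fun y : ℝ => (((X : ℝ[X]) * (1 - X) * mgPoly k)).eval y)
      = fun y => (derivative ((X : ℝ[X]) * (1 - X) * mgPoly k)).eval y :=
    funext fun y => Polynomial.deriv _
  rw [hf, hd1, Polynomial.deriv, mg_main, eval_mul, eval_C, mg_eval]
  push_cast
  ring

end ModGegenbauerAux
end

section
/- For 1 ≤ y ≤ M-1, the beta-binomial probability C(M,y)·Γ(θ)/(Γ(αθ)Γ(βθ))·Γ(y+αθ)Γ(M-y+βθ)/Γ(M+θ), viewed as a function of θ at fixed α, satisfies: its limit as θ→0⁺ is 0 and its derivative at θ=0 is αβ·M/(y(M-y)); equivalently it equals αβθ·M/(y(M-y)) + O(θ²). -/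
/-- The beta-binomial probability of a polymorphic sample as a function of `θ`. -/
noncomputable def betaBinom (α : ℝ) (M y : ℕ) (θ : ℝ) : ℝ :=
  (Nat.choose M y : ℝ) * Real.Gamma θ /
      (Real.Gamma (α * θ) * Real.Gamma ((1 - α) * θ)) *
    (Real.Gamma ((y : ℝ) + α * θ) * Real.Gamma ((M : ℝ) - y + (1 - α) * θ) /
      Real.Gamma ((M : ℝ) + θ))

/-!
Since `Γ(θ) / (Γ(αθ) Γ(βθ)) = αβθ · Γ(θ+1) / (Γ(αθ+1) Γ(βθ+1))`, the beta-binomial probability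
is `αβθ` times a function that is continuous at `θ = 0`, where its value is
`C(M,y) Γ(y) Γ(M-y) / Γ(M) = M / (y (M-y))`.
-/

open Real Filter Topology Set

theorem Real.Gamma_add_div_Gamma_mul_Gamma {a b : ℝ} (ha : a ≠ 0) (hb : b ≠ 0) (hab : a + b ≠ 0) :
    Gamma (a + b) / (Gamma a * Gamma b) =
      a * b / (a + b) * (Gamma (a + b + 1) / (Gamma (a + 1) * Gamma (b + 1))) := by
  rw [Gamma_add_one ha, Gamma_add_one hb, Gamma_add_one hab, mul_mul_mul_comm,
    mul_div_mul_comm, ← mul_assoc, div_mul_div_comm, mul_comm (a * b),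
    div_self (mul_ne_zero hab (mul_ne_zero ha hb)), one_mul]

@[fun_prop]
theorem ContinuousAt.real_Gamma {X : Type*} [TopologicalSpace X] {f : X → ℝ} {x : X}
    (hf : ContinuousAt f x) (hx : 0 < f x) : ContinuousAt (fun z => Gamma (f z)) x :=
  ((differentiableOn_Gamma_Ioi.differentiableAt (Ioi_mem_nhds hx)).continuousAt).comp hf

theorem Nat.cast_choose_mul_Gamma_mul_Gamma {n k : ℕ} (hk : 0 < k) (hkn : k < n) :
    (n.choose k : ℝ) * Gamma k * Gamma (n - k) = n / (k * (n - k)) * Gamma n := by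
  have hk' : (0 : ℝ) < k := Nat.cast_pos.2 hk
  have hnk : (0 : ℝ) < n - k := sub_pos.2 (Nat.cast_lt.2 hkn)
  have hn : (0 : ℝ) < n := hk'.trans (Nat.cast_lt.2 hkn)
  have hfact : (n.choose k : ℝ) * Gamma (k + 1) * Gamma (n - k + 1) = n * Gamma n := by
    rw [← Gamma_add_one hn.ne', ← Nat.cast_sub hkn.le, Gamma_nat_eq_factorial,
      Gamma_nat_eq_factorial, Gamma_nat_eq_factorial]
    exact_mod_cast Nat.choose_mul_factorial_mul_factorial hkn.le
  rw [Gamma_add_one hk'.ne', Gamma_add_one hnk.ne'] at hfact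
  rw [div_mul_eq_mul_div, eq_div_iff (by positivity)]
  linear_combination hfact

/-- `betaBinom α M y θ / (α (1 - α) θ)`, written so that it is visibly continuous at `θ = 0`. -/
noncomputable def betaBinomReduced (α : ℝ) (M y : ℕ) (θ : ℝ) : ℝ :=
  (M.choose y : ℝ) * Gamma (θ + 1) / (Gamma (α * θ + 1) * Gamma ((1 - α) * θ + 1)) *
    (Gamma ((y : ℝ) + α * θ) * Gamma ((M : ℝ) - y + (1 - α) * θ) / Gamma ((M : ℝ) + θ))

theorem betaBinom_eq_mul_betaBinomReduced {α θ : ℝ} (hα : α ≠ 0) (hα1 : 1 - α ≠ 0) (hθ : θ ≠ 0)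
    (M y : ℕ) : betaBinom α M y θ = α * (1 - α) * θ * betaBinomReduced α M y θ := by
  have hsplit : α * θ + (1 - α) * θ = θ := by ring
  have hrecip := Real.Gamma_add_div_Gamma_mul_Gamma (mul_ne_zero hα hθ) (mul_ne_zero hα1 hθ)
    (by rwa [hsplit])
  rw [hsplit] at hrecip
  rw [betaBinom, betaBinomReduced, mul_div_assoc, hrecip]
  field_simp

theorem continuousAt_betaBinomReduced (α : ℝ) {M y : ℕ} (hy : 0 < y) (hyM : y < M) :
    ContinuousAt (betaBinomReduced α M y) 0 := by
  have hy' : (0 : ℝ) < y := Nat.cast_pos.2 hy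
  have hMy : (0 : ℝ) < M - y := sub_pos.2 (Nat.cast_lt.2 hyM)
  have hM : (0 : ℝ) < M := hy'.trans (Nat.cast_lt.2 hyM)
  unfold betaBinomReduced
  fun_prop (disch := norm_num [hy', hMy, hM, (Gamma_pos_of_pos _).ne'])

theorem betaBinomReduced_zero (α : ℝ) {M y : ℕ} (hy : 0 < y) (hyM : y < M) :
    betaBinomReduced α M y 0 = M / (y * (M - y)) := by
  have hM : (0 : ℝ) < M := Nat.cast_pos.2 (hy.trans hyM)
  simp only [betaBinomReduced, mul_zero, add_zero, zero_add, Gamma_one, mul_one, div_one,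
    ← mul_div_assoc, ← mul_assoc, Nat.cast_choose_mul_Gamma_mul_Gamma hy hyM]
  exact mul_div_cancel_right₀ _ (Gamma_pos_of_pos hM).ne'

theorem betaBinom_polymorphic_small_theta_general (α β : ℝ) (hα : 0 < α) (hα1 : α < 1)
    (hβ : β = 1 - α) (M y : ℕ) (hy1 : 1 ≤ y) (hy2 : y ≤ M - 1) :
    Filter.Tendsto (betaBinom α M y) (nhdsWithin 0 (Set.Ioi 0)) (nhds 0) ∧
    Filter.Tendsto (fun θ => betaBinom α M y θ / θ) (nhdsWithin 0 (Set.Ioi 0))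
      (nhds (α * β * (M : ℝ) / ((y : ℝ) * ((M : ℝ) - y)))) := by
  subst hβ
  have hyM : y < M := by omega
  have hne : ∀ᶠ θ in 𝓝[>] (0 : ℝ), θ ≠ 0 := eventually_mem_nhdsWithin.mono fun _ h => ne_of_gt h
  have hreduced :=
    (continuousAt_betaBinomReduced α hy1 hyM).tendsto.mono_left (nhdsWithin_le_nhds (s := Ioi 0))
  rw [betaBinomReduced_zero α hy1 hyM] at hreduced
  have hratio : Tendsto (fun θ => betaBinom α M y θ / θ) (𝓝[>] 0)
      (𝓝 (α * (1 - α) * M / (y * (M - y)))) := by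
    rw [mul_div_assoc]
    refine (hreduced.const_mul _).congr' (hne.mono fun θ hθ => ?_)
    beta_reduce
    rw [betaBinom_eq_mul_betaBinomReduced hα.ne' (sub_pos.2 hα1).ne' hθ, mul_right_comm _ θ,
      mul_div_cancel_right₀ _ hθ]
  refine ⟨?_, hratio⟩
  simpa using (hratio.mul (tendsto_nhdsWithin_of_tendsto_nhds tendsto_id)).congr'
    (hne.mono fun θ hθ => div_mul_cancel₀ _ hθ)

/-- For a polymorphic sample `1 ≤ y ≤ M-1`, the beta-binomial probability tends
to `0` as `θ → 0⁺` and its (right-)derivative at `θ = 0` is `αβ·M/(y(M-y))`;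
i.e. it equals `αβθ·M/(y(M-y)) + O(θ²)`. -/
theorem betaBinom_polymorphic_small_theta (α β : ℝ) (hα : 0 < α) (hα1 : α < 1)
    (hβ : β = 1 - α) (M y : ℕ) (hM : 2 ≤ M) (hy1 : 1 ≤ y) (hy2 : y ≤ M - 1) :
    Filter.Tendsto (betaBinom α M y) (nhdsWithin 0 (Set.Ioi 0)) (nhds 0) ∧
    Filter.Tendsto (fun θ => betaBinom α M y θ / θ) (nhdsWithin 0 (Set.Ioi 0))
      (nhds (α * β * (M : ℝ) / ((y : ℝ) * ((M : ℝ) - y)))) :=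
  betaBinom_polymorphic_small_theta_general α β hα hα1 hβ M y hy1 hy2
end

section
/- For y = 0, the beta-binomial probability equals βθ(1+βθ)(2+βθ)⋯(M-1+βθ) / (θ(1+θ)(2+θ)⋯(M-1+θ)), and its first-order Taylor expansion at θ=0 is β - αβθ·Σ_{k=1}^{M-1} 1/k + O(θ²). -/
/-!
Since `Γ(M + x) = x(x+1)⋯(x+M-1) Γ(x)`, the Gamma factors cancel and the probability is a
ratio of rising factorials. Its `k = 0` factors give `βθ / θ = β`, and what remains,
`∏_{k=1}^{M-1} (k + βθ)/(k + θ)`, is differentiable at `θ = 0` with value `1` and derivative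
`∑_{k=1}^{M-1} (β - 1)/k = -α ∑ 1/k`; the limit and slope of the probability at `0⁺` are those of
this smooth extension.
-/

/-- The beta-binomial probability of the monomorphic sample `y = 0`. -/
noncomputable def betaBinomZero (α : ℝ) (M : ℕ) (θ : ℝ) : ℝ :=
  Real.Gamma θ / (Real.Gamma (α * θ) * Real.Gamma ((1 - α) * θ)) *
    (Real.Gamma (α * θ) * Real.Gamma ((M : ℝ) + (1 - α) * θ) / Real.Gamma ((M : ℝ) + θ))

open Finset Filter Topology

theorem Real.Gamma_nat_add_eq_prod_mul (n : ℕ) {x : ℝ} (hx : ∀ k : ℕ, x ≠ -k) :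
    Real.Gamma (n + x) = (∏ k ∈ range n, ((k : ℝ) + x)) * Real.Gamma x := by
  induction n with
  | zero => simp
  | succ n ih =>
    have hnx : (n : ℝ) + x ≠ 0 := fun h => hx n (by linarith)
    rw [Nat.cast_succ, add_right_comm, Real.Gamma_add_one hnx, ih, prod_range_succ]
    ring

theorem betaBinomZero_eq_prod_div {α θ : ℝ} (hα : 0 < α) (hα1 : α < 1) (M : ℕ) (hθ : 0 < θ) :
    betaBinomZero α M θ =
      (∏ k ∈ range M, ((k : ℝ) + (1 - α) * θ)) / ∏ k ∈ range M, ((k : ℝ) + θ) := by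
  have not_neg_nat {x : ℝ} (hx : 0 < x) (k : ℕ) : x ≠ -k := by
    have := k.cast_nonneg (α := ℝ); linarith
  have hβθ : 0 < (1 - α) * θ := mul_pos (by linarith) hθ
  have hGθ := (Real.Gamma_pos_of_pos hθ).ne'
  have hGαθ := (Real.Gamma_pos_of_pos (mul_pos hα hθ)).ne'
  have hGβθ := (Real.Gamma_pos_of_pos hβθ).ne'
  rw [betaBinomZero, Real.Gamma_nat_add_eq_prod_mul M (not_neg_nat hβθ),
    Real.Gamma_nat_add_eq_prod_mul M (not_neg_nat hθ)]
  field_simp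
  rw [mul_comm θ, mul_div_cancel_left₀ _ hGβθ]

theorem Finset.prod_range_eq_mul_prod_Icc {R : Type*} [CommMonoid R] (f : ℕ → R) {n : ℕ}
    (hn : 1 ≤ n) : ∏ k ∈ range n, f k = f 0 * ∏ k ∈ Icc 1 (n - 1), f k := by
  obtain ⟨m, rfl⟩ := Nat.exists_eq_add_of_le' hn
  rw [prod_range_eq_mul_Ico f (Nat.succ_pos m), Nat.add_sub_cancel, Nat.succ_eq_add_one,
    Ico_add_one_right_eq_Icc]

theorem prod_range_add_mul_div_prod_range_add (b : ℝ) {θ : ℝ} (hθ : θ ≠ 0) {n : ℕ} (hn : 1 ≤ n) :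
    (∏ k ∈ range n, ((k : ℝ) + b * θ)) / ∏ k ∈ range n, ((k : ℝ) + θ) =
      b * ∏ k ∈ Icc 1 (n - 1), ((k : ℝ) + b * θ) / ((k : ℝ) + θ) := by
  rw [prod_range_eq_mul_prod_Icc _ hn, prod_range_eq_mul_prod_Icc _ hn, prod_div_distrib]
  simp only [Nat.cast_zero, zero_add]
  field_simp

theorem hasDerivAt_prod_add_mul_div_add (b : ℝ) {s : Finset ℕ} (hs : 0 ∉ s) :
    HasDerivAt (fun θ : ℝ => ∏ k ∈ s, ((k : ℝ) + b * θ) / ((k : ℝ) + θ))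
      (∑ k ∈ s, (b - 1) / k) 0 := by
  have hk : ∀ k ∈ s, (k : ℝ) ≠ 0 := fun k hk => Nat.cast_ne_zero.2 (ne_of_mem_of_not_mem hk hs)
  have factor_deriv : ∀ k ∈ s,
      HasDerivAt (fun θ : ℝ => ((k : ℝ) + b * θ) / ((k : ℝ) + θ)) ((b - 1) / k) 0 := by
    intro k hks
    have hnum := ((hasDerivAt_id' (0 : ℝ)).const_mul b).const_add (k : ℝ)
    have hden := (hasDerivAt_id' (0 : ℝ)).const_add (k : ℝ)
    have hk0 := hk k hks
    refine (hnum.fun_div hden (by simpa using hk0)).congr_deriv ?_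
    field_simp
    ring
  have := HasDerivAt.fun_finsetProd factor_deriv
  rwa [sum_congr rfl fun k _ => by
    rw [prod_eq_one fun j hj => by simp [hk j (mem_of_mem_erase hj)], one_smul]] at this

theorem tendsto_and_tendsto_slope_of_eventuallyEq {f g : ℝ → ℝ} {g' : ℝ}
    (hfg : f =ᶠ[𝓝[>] 0] g) (hg : HasDerivAt g g' 0) :
    Tendsto f (𝓝[>] 0) (𝓝 (g 0)) ∧ Tendsto (fun θ => (f θ - g 0) / θ) (𝓝[>] 0) (𝓝 g') := by
  refine ⟨(hg.continuousAt.continuousWithinAt.tendsto).congr' hfg.symm, ?_⟩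
  refine ((hasDerivWithinAt_iff_tendsto_slope' (lt_irrefl 0)).1 hg.hasDerivWithinAt).congr' ?_
  filter_upwards [hfg] with θ hθ
  rw [slope_def_field, hθ, sub_zero]

/-- For `y = 0`, the beta-binomial probability equals
`βθ(1+βθ)⋯(M-1+βθ) / (θ(1+θ)⋯(M-1+θ))`, and its first-order Taylor expansion at
`θ = 0` is `β - αβθ·Σ_{k=1}^{M-1} 1/k + O(θ²)`. -/
theorem betaBinomZero_small_theta (α β : ℝ) (hα : 0 < α) (hα1 : α < 1)
    (hβ : β = 1 - α) (M : ℕ) (hM : 2 ≤ M) :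
    (∀ θ : ℝ, 0 < θ →
      betaBinomZero α M θ =
        (∏ k ∈ Finset.range M, ((k : ℝ) + β * θ)) /
          (∏ k ∈ Finset.range M, ((k : ℝ) + θ))) ∧
    Filter.Tendsto (betaBinomZero α M) (nhdsWithin 0 (Set.Ioi 0)) (nhds β) ∧
    Filter.Tendsto (fun θ => (betaBinomZero α M θ - β) / θ) (nhdsWithin 0 (Set.Ioi 0))
      (nhds (-(α * β * ∑ k ∈ Finset.Icc 1 (M - 1), 1 / (k : ℝ)))) := by
  subst hβ
  set g : ℝ → ℝ := fun θ =>
    (1 - α) * ∏ k ∈ Icc 1 (M - 1), ((k : ℝ) + (1 - α) * θ) / ((k : ℝ) + θ)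
  have hg0 : g 0 = 1 - α := by
    simp only [g, mul_zero, add_zero]
    rw [prod_eq_one fun k hk => div_self (Nat.cast_ne_zero.2 (by simp at hk; omega)), mul_one]
  have hg : HasDerivAt g (-(α * (1 - α) * ∑ k ∈ Icc 1 (M - 1), 1 / (k : ℝ))) 0 := by
    refine ((hasDerivAt_prod_add_mul_div_add (1 - α) (s := Icc 1 (M - 1)) (by simp)).const_mul
      (1 - α)).congr_deriv ?_
    simp only [mul_sum, ← sum_neg_distrib]
    exact sum_congr rfl fun k _ => by ring
  have hfg : betaBinomZero α M =ᶠ[𝓝[>] 0] g := by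
    filter_upwards [self_mem_nhdsWithin] with θ hθ
    rw [betaBinomZero_eq_prod_div hα hα1 M hθ,
      prod_range_add_mul_div_prod_range_add _ (ne_of_gt hθ) (by omega)]
  have := tendsto_and_tendsto_slope_of_eventuallyEq hfg hg
  rw [hg0] at this
  exact ⟨fun θ => betaBinomZero_eq_prod_div hα hα1 M, this⟩
end
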